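/- arXiv:math/9802066 — 5 statements merged into one kernel-verified Lean document; each statement's English description precedes it below -/
import Mathlib

section
/- Let G be a group with central subgroup B containing [G,G], let U, V ≤ G with [V,U] ⊆ U, let L abelian and β : G × G → L biadditive with [G,G] contained in both the left and right kernels of β. Suppose f_U : U → L and f_V : V → L agree on U ∩ V and each satisfies f(xy) = f(x)+f(y)+β(x,y) on its domain, and f_U([x,y]) = β(x,y) - β(y,x) whenever x ∈ V, y ∈ U with [x,y] ∈ U. Then the map f_W : UV → L defined by f_W(uv) = f_U(u) + f_V(v) + β(u,v) is well-defined, extends f_U and f_V, and satisfies f_W(xy) = f_W(x) + f_W(y) + β(x,y) for all x, y ∈ UV. -/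
/-!
Two factorisations `u₁ * v₁ = u₂ * v₂` of an element of `UV` differ by
`w = u₂⁻¹ * u₁ = v₂ * v₁⁻¹ ∈ U ∩ V`; since `f_U` and `f_V` agree on `w`, the functional equations
show that `f_U(u) + f_V(v) + β(u, v)` does not depend on the factorisation. For the functional
equation of `f_W`, move `v₁` past `u₂` using `v₁ * u₂ = ⁅v₁, u₂⁆ * u₂ * v₁` (Mathlib's convention
`⁅x, y⁆ = x * y * x⁻¹ * y⁻¹`): the commutator lies in `U`, is invisible to `β`, and its value
under `f_U` is exactly the correction `β(v₁, u₂) - β(u₂, v₁)` needed to swap the two factors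
inside `β`.
-/

open scoped commutatorElement

open Classical in
noncomputable def mulLift {G α : Type*} [Mul G] [Zero α] (U V : Set G) (F : G → G → α)
    (x : G) : α :=
  if h : ∃ p : G × G, p.1 ∈ U ∧ p.2 ∈ V ∧ p.1 * p.2 = x then F h.choose.1 h.choose.2 else 0

theorem mulLift_mul {G α : Type*} [Mul G] [Zero α] {U V : Set G} {F : G → G → α}
    (hF : ∀ u₁ ∈ U, ∀ v₁ ∈ V, ∀ u₂ ∈ U, ∀ v₂ ∈ V, u₁ * v₁ = u₂ * v₂ → F u₁ v₁ = F u₂ v₂)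
    {u v : G} (hu : u ∈ U) (hv : v ∈ V) : mulLift U V F (u * v) = F u v := by
  have h : ∃ p : G × G, p.1 ∈ U ∧ p.2 ∈ V ∧ p.1 * p.2 = u * v := ⟨(u, v), hu, hv, rfl⟩
  obtain ⟨hu', hv', huv⟩ := h.choose_spec
  rw [mulLift, dif_pos h]
  exact hF _ hu' _ hv' _ hu _ hv huv

section

variable {G L : Type*} [Group G] [AddCommGroup L] {β : G → G → L}

theorem biadd_one_left (hβl : ∀ x x' y : G, β (x * x') y = β x y + β x' y) (y : G) :
    β 1 y = 0 := by
  simpa using hβl 1 1 y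

theorem biadd_one_right (hβr : ∀ x y y' : G, β x (y * y') = β x y + β x y') (x : G) :
    β x 1 = 0 :=
  biadd_one_left (β := flip β) (fun y y' x => hβr x y y') x

theorem map_one_of_map_mul_add (hβl : ∀ x x' y : G, β (x * x') y = β x y + β x' y)
    {H : Subgroup G} {f : G → L} (hf : ∀ x ∈ H, ∀ y ∈ H, f (x * y) = f x + f y + β x y) :
    f 1 = 0 := by
  simpa [biadd_one_left hβl] using hf 1 H.one_mem 1 H.one_mem

theorem exists_mem_inf_of_mul_eq {U V : Subgroup G} {u₁ u₂ v₁ v₂ : G} (hu₁ : u₁ ∈ U)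
    (hu₂ : u₂ ∈ U) (hv₁ : v₁ ∈ V) (hv₂ : v₂ ∈ V) (h : u₁ * v₁ = u₂ * v₂) :
    ∃ w ∈ U, w ∈ V ∧ u₁ = u₂ * w ∧ v₂ = w * v₁ := by
  have hw : u₂⁻¹ * u₁ = v₂ * v₁⁻¹ := by
    rw [inv_mul_eq_iff_eq_mul, ← mul_assoc, ← h, mul_inv_cancel_right]
  refine ⟨u₂⁻¹ * u₁, U.mul_mem (U.inv_mem hu₂) hu₁, ?_, (mul_inv_cancel_left _ _).symm, ?_⟩
  · rw [hw]; exact V.mul_mem hv₂ (V.inv_mem hv₁)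
  · rw [hw, inv_mul_cancel_right]

theorem mul_mul_mul_eq_mul_commutatorElement (u v u' v' : G) :
    u * v * (u' * v') = u * ⁅v, u'⁆ * u' * (v * v') := by
  simp only [commutatorElement_def]
  group

variable (hβl : ∀ x x' y : G, β (x * x') y = β x y + β x' y)
  (hβr : ∀ x y y' : G, β x (y * y') = β x y + β x y')
  {U V : Subgroup G} {fU fV : G → L}
  (hfU : ∀ x ∈ U, ∀ y ∈ U, fU (x * y) = fU x + fU y + β x y)
  (hfV : ∀ x ∈ V, ∀ y ∈ V, fV (x * y) = fV x + fV y + β x y)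
include hβl hβr hfU hfV

theorem extension_wellDefined (hagree : ∀ x : G, x ∈ U → x ∈ V → fU x = fV x) :
    ∀ u₁ ∈ U, ∀ v₁ ∈ V, ∀ u₂ ∈ U, ∀ v₂ ∈ V, u₁ * v₁ = u₂ * v₂ →
      fU u₁ + fV v₁ + β u₁ v₁ = fU u₂ + fV v₂ + β u₂ v₂ := by
  intro u₁ hu₁ v₁ hv₁ u₂ hu₂ v₂ hv₂ h
  obtain ⟨w, hwU, hwV, rfl, rfl⟩ := exists_mem_inf_of_mul_eq hu₁ hu₂ hv₁ hv₂ h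
  rw [hfU u₂ hu₂ w hwU, hfV w hwV v₁ hv₁, hagree w hwU hwV, hβl, hβr]
  abel

theorem extension_map_mul_add {fW : G → L}
    (hfW : ∀ u ∈ U, ∀ v ∈ V, fW (u * v) = fU u + fV v + β u v)
    (hVU : ∀ v ∈ V, ∀ u ∈ U, ⁅v, u⁆ ∈ U)
    (hβcomm : ∀ x y z : G, β ⁅x, y⁆ z = 0 ∧ β z ⁅x, y⁆ = 0)
    (hfUcomm : ∀ x ∈ V, ∀ y ∈ U, ⁅x, y⁆ ∈ U → fU ⁅x, y⁆ = β x y - β y x)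
    {u₁ u₂ v₁ v₂ : G} (hu₁ : u₁ ∈ U) (hu₂ : u₂ ∈ U) (hv₁ : v₁ ∈ V) (hv₂ : v₂ ∈ V) :
    fW (u₁ * v₁ * (u₂ * v₂)) = fW (u₁ * v₁) + fW (u₂ * v₂) + β (u₁ * v₁) (u₂ * v₂) := by
  set c := ⁅v₁, u₂⁆
  have hcU : c ∈ U := hVU v₁ hv₁ u₂ hu₂
  have hβc_left (z : G) : β c z = 0 := (hβcomm _ _ z).1
  have hβc_right (z : G) : β z c = 0 := (hβcomm _ _ z).2
  rw [mul_mul_mul_eq_mul_commutatorElement,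
    hfW _ (U.mul_mem (U.mul_mem hu₁ hcU) hu₂) _ (V.mul_mem hv₁ hv₂), hfW u₁ hu₁ v₁ hv₁,
    hfW u₂ hu₂ v₂ hv₂, hfU _ (U.mul_mem hu₁ hcU) u₂ hu₂, hfU u₁ hu₁ c hcU, hfV v₁ hv₁ v₂ hv₂,
    hfUcomm v₁ hv₁ u₂ hu₂ hcU]
  simp only [hβl, hβr, hβc_left, hβc_right]
  abel

end

theorem extension_lemma_general {G L : Type*} [Group G] [AddCommGroup L]
    (U V : Subgroup G) (hVU : ∀ v ∈ V, ∀ u ∈ U, ⁅v, u⁆ ∈ U)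
    (β : G → G → L)
    (hβl : ∀ x x' y : G, β (x * x') y = β x y + β x' y)
    (hβr : ∀ x y y' : G, β x (y * y') = β x y + β x y')
    (hβcomm : ∀ x y z : G, β ⁅x, y⁆ z = 0 ∧ β z ⁅x, y⁆ = 0)
    (fU fV : G → L)
    (hagree : ∀ x : G, x ∈ U → x ∈ V → fU x = fV x)
    (hfU : ∀ x ∈ U, ∀ y ∈ U, fU (x * y) = fU x + fU y + β x y)
    (hfV : ∀ x ∈ V, ∀ y ∈ V, fV (x * y) = fV x + fV y + β x y)
    (hfUcomm : ∀ x ∈ V, ∀ y ∈ U, ⁅x, y⁆ ∈ U → fU ⁅x, y⁆ = β x y - β y x) :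
    ∃ fW : G → L,
      (∀ u ∈ U, ∀ v ∈ V, fW (u * v) = fU u + fV v + β u v) ∧
      (∀ u ∈ U, fW u = fU u) ∧
      (∀ v ∈ V, fW v = fV v) ∧
      (∀ x y : G, (∃ u ∈ U, ∃ v ∈ V, x = u * v) → (∃ u ∈ U, ∃ v ∈ V, y = u * v) →
        fW (x * y) = fW x + fW y + β x y) := by
  set fW := mulLift (U : Set G) V fun u v => fU u + fV v + β u v
  have hfW : ∀ u ∈ U, ∀ v ∈ V, fW (u * v) = fU u + fV v + β u v := fun u hu v hv =>
    mulLift_mul (extension_wellDefined hβl hβr hfU hfV hagree) hu hv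
  refine ⟨fW, hfW, fun u hu => ?_, fun v hv => ?_, ?_⟩
  · simpa [map_one_of_map_mul_add hβl hfV, biadd_one_right hβr] using hfW u hu 1 V.one_mem
  · simpa [map_one_of_map_mul_add hβl hfU, biadd_one_left hβl] using hfW 1 U.one_mem v hv
  · rintro _ _ ⟨u₁, hu₁, v₁, hv₁, rfl⟩ ⟨u₂, hu₂, v₂, hv₂, rfl⟩
    exact extension_map_mul_add hβl hβr hfU hfV hfW hVU hβcomm hfUcomm hu₁ hu₂ hv₁ hv₂

/-- Extension lemma: `G` a group with central subgroup `B` containing `[G,G]`, `U`, `V`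
subgroups with `[V,U] ⊆ U`, `L` abelian, `β : G × G → L` biadditive with commutators in
both kernels. If `f_U`, `f_V` agree on `U ∩ V`, each satisfies the functional equation
`f(xy) = f(x)+f(y)+β(x,y)` on its subgroup, and `f_U([x,y]) = β(x,y)-β(y,x)` for
`x ∈ V, y ∈ U` with `[x,y] ∈ U`, then `f_W(uv) = f_U(u)+f_V(v)+β(u,v)` gives a
well-defined map on `UV` extending both and satisfying the functional equation. -/
theorem extension_lemma {G L : Type*} [Group G] [AddCommGroup L]
    (B : Subgroup G) (hBcentral : B ≤ Subgroup.center G)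
    (hcomm : ∀ x y : G, ⁅x, y⁆ ∈ B)
    (U V : Subgroup G) (hVU : ∀ v ∈ V, ∀ u ∈ U, ⁅v, u⁆ ∈ U)
    (β : G → G → L)
    (hβl : ∀ x x' y : G, β (x * x') y = β x y + β x' y)
    (hβr : ∀ x y y' : G, β x (y * y') = β x y + β x y')
    (hβcomm : ∀ x y z : G, β ⁅x, y⁆ z = 0 ∧ β z ⁅x, y⁆ = 0)
    (fU fV : G → L)
    (hagree : ∀ x : G, x ∈ U → x ∈ V → fU x = fV x)
    (hfU : ∀ x ∈ U, ∀ y ∈ U, fU (x * y) = fU x + fU y + β x y)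
    (hfV : ∀ x ∈ V, ∀ y ∈ V, fV (x * y) = fV x + fV y + β x y)
    (hfUcomm : ∀ x ∈ V, ∀ y ∈ U, ⁅x, y⁆ ∈ U → fU ⁅x, y⁆ = β x y - β y x) :
    ∃ fW : G → L,
      (∀ u ∈ U, ∀ v ∈ V, fW (u * v) = fU u + fV v + β u v) ∧
      (∀ u ∈ U, fW u = fU u) ∧
      (∀ v ∈ V, fW v = fV v) ∧
      (∀ x y : G, (∃ u ∈ U, ∃ v ∈ V, x = u * v) → (∃ u ∈ U, ∃ v ∈ V, y = u * v) →
        fW (x * y) = fW x + fW y + β x y) :=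
  extension_lemma_general U V hVU β hβl hβr hβcomm fU fV hagree hfU hfV hfUcomm
end

section
/- Let G be a nilpotent group of class at most 2 ([G,G] ⊆ Z(G)), B a central subgroup with G/B abelian containing [G,G], L a divisible abelian group, β : G × G → L biadditive vanishing on B in each argument, H a subgroup with B ⊆ H ⊊ G, and f : H → L a map satisfying f(xy) = f(x)+f(y)+β(x,y) for x,y ∈ H, injective additive on B, and f([x,y]) = β(x,y)-β(y,x) for all x,y ∈ G (noting [x,y] ∈ B ⊆ H). Then for any g ∈ G \ H, f extends to a map on ⟨H, g⟩ satisfying the same three conditions. -/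
/-!
Because `[G,G] ⊆ B ⊆ H`, the subgroup `H` is normal, so every element of `⟨H, g⟩` is `h * g ^ n`
with `h ∈ H`. On the exponents `d` with `g ^ d ∈ H` (a subgroup of `ℤ`), `d ↦ f (g ^ d)` is
additive up to the cocycle `(a * b) • β g g`; divisibility of `L` extends it to a quadratic
`φ : ℤ → L` with `φ (a + b) = φ a + φ b + β (g ^ a) (g ^ b)`. Then
`f' (h * g ^ n) = f h + φ n + β h (g ^ n)` is well defined, and the functional equation follows
from `h * g ^ n * (k * g ^ m) = h * ⁅g ^ n, k⁆ * k * g ^ (n + m)`, the commutator term being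
paid for by `f ⁅g ^ n, k⁆ = β (g ^ n) k - β k (g ^ n)`.
-/

open scoped commutatorElement

section

variable {G L : Type*} [Group G] [AddCommGroup L]

theorem map_zpow_of_map_mul {φ : G → L} (hφ : ∀ x y, φ (x * y) = φ x + φ y) (x : G) (n : ℤ) :
    φ (x ^ n) = n • φ x :=
  congrArg Multiplicative.toAdd
    ((MonoidHom.mk' (fun x => Multiplicative.ofAdd (φ x)) hφ).map_zpow x n)

theorem map_zpow_zpow_of_biadditive {β : G → G → L}
    (hβl : ∀ x x' y : G, β (x * x') y = β x y + β x' y)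
    (hβr : ∀ x y y' : G, β x (y * y') = β x y + β x y') (x y : G) (a b : ℤ) :
    β (x ^ a) (y ^ b) = (a * b) • β x y :=
  calc β (x ^ a) (y ^ b) = a • β x (y ^ b) :=
      map_zpow_of_map_mul (φ := (β · (y ^ b))) (fun x x' => hβl x x' _) x a
    _ = (a * b) • β x y := by rw [map_zpow_of_map_mul (hβr x) y b, mul_smul]

theorem Subgroup.normal_of_commutator_mem {H : Subgroup G} (hH : ∀ x y : G, ⁅x, y⁆ ∈ H) :
    H.Normal :=
  ⟨fun n hn g => by simpa [commutatorElement_def] using mul_mem (hH g n) hn⟩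

end

section Divisible

variable {L : Type*} [AddCommGroup L]

theorem exists_zsmul_eq_of_divisible (hdiv : ∀ n : ℕ, 0 < n → ∀ l : L, ∃ m : L, n • m = l)
    {k : ℤ} (hk : k ≠ 0) (l : L) : ∃ c : L, k • c = l := by
  rcases Int.natAbs_eq k with h | h
  · obtain ⟨c, hc⟩ := hdiv k.natAbs (by omega) l
    exact ⟨c, by rw [h, natCast_zsmul, hc]⟩
  · obtain ⟨c, hc⟩ := hdiv k.natAbs (by omega) (-l)
    exact ⟨c, by rw [h, neg_smul, natCast_zsmul, hc, neg_neg]⟩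

theorem exists_zsmul_eq_of_map_add (hdiv : ∀ n : ℕ, 0 < n → ∀ l : L, ∃ m : L, n • m = l)
    {S : AddSubgroup ℤ} {ψ : ℤ → L} (hψ : ∀ a ∈ S, ∀ b ∈ S, ψ (a + b) = ψ a + ψ b) :
    ∃ c : L, ∀ d ∈ S, ψ d = d • c := by
  let ψS : S →+ L := AddMonoidHom.mk' (fun d => ψ d) fun a b => hψ a a.2 b b.2
  obtain ⟨k, rfl⟩ := Int.subgroup_cyclic S
  have hk : k ∈ AddSubgroup.closure {k} := AddSubgroup.subset_closure rfl
  obtain ⟨c, hc⟩ : ∃ c : L, k • c = ψ k := by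
    by_cases hk0 : k = 0
    · exact ⟨0, by rw [hk0, zero_smul]; exact ψS.map_zero.symm⟩
    · exact exists_zsmul_eq_of_divisible hdiv hk0 _
  refine ⟨c, fun d hd => ?_⟩
  obtain ⟨m, rfl⟩ := AddSubgroup.mem_closure_singleton.mp hd
  calc ψ (m • k) = ψS (m • ⟨k, hk⟩) := rfl
    _ = (m • k) • c := by rw [map_zsmul, smul_eq_mul, mul_smul, hc]; rfl

theorem exists_quadratic_extension (hdiv : ∀ n : ℕ, 0 < n → ∀ l : L, ∃ m : L, n • m = l)
    {S : AddSubgroup ℤ} (q : L) {F : ℤ → L}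
    (hF : ∀ a ∈ S, ∀ b ∈ S, F (a + b) = F a + F b + (a * b) • q) :
    ∃ φ : ℤ → L, (∀ a b, φ (a + b) = φ a + φ b + (a * b) • q) ∧ ∀ d ∈ S, φ d = F d := by
  obtain ⟨γ, hγ⟩ := exists_zsmul_eq_of_divisible hdiv two_ne_zero q
  -- `(d * (d - 1)) • γ` stands for `choose d 2 • q`, avoiding division by `2`
  obtain ⟨c, hc⟩ := exists_zsmul_eq_of_map_add hdiv (S := S)
    (ψ := fun d => F d - (d * (d - 1)) • γ) fun a ha b hb => by
      simp only [hF a ha b hb, ← hγ]; module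
  exact ⟨fun d => d • c + (d * (d - 1)) • γ, fun a b => by simp only [← hγ]; module,
    fun d hd => by simp only [← hc d hd]; abel⟩

end Divisible

def Subgroup.zpowExponents {G : Type*} [Group G] (H : Subgroup G) (g : G) : AddSubgroup ℤ where
  carrier := {d | g ^ d ∈ H}
  zero_mem' := by simp [H.one_mem]
  add_mem' {a b} ha hb := by simpa [zpow_add] using H.mul_mem ha hb
  neg_mem' {a} ha := by simpa [zpow_neg] using H.inv_mem ha

section Extension

variable {G L : Type*} [Group G] [AddCommGroup L] {H : Subgroup G} {g : G} {f : G → L}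
  {φ : ℤ → L} {β : G → G → L}

open Classical in
noncomputable def extendByZPow (H : Subgroup G) (g : G) (f : G → L) (φ : ℤ → L)
    (β : G → G → L) (x : G) : L :=
  if hx : ∃ p : G × ℤ, p.1 ∈ H ∧ p.1 * g ^ p.2 = x then
    f hx.choose.1 + φ hx.choose.2 + β hx.choose.1 (g ^ hx.choose.2)
  else 0

theorem extendByZPow_formula_congr (hβl : ∀ x x' y : G, β (x * x') y = β x y + β x' y)
    (hβr : ∀ x y y' : G, β x (y * y') = β x y + β x y')
    (hf : ∀ x ∈ H, ∀ y ∈ H, f (x * y) = f x + f y + β x y)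
    (hφ : ∀ a b, φ (a + b) = φ a + φ b + β (g ^ a) (g ^ b))
    (hφH : ∀ d, g ^ d ∈ H → φ d = f (g ^ d)) {h h' : G} (hh : h ∈ H) (hh' : h' ∈ H) {n m : ℤ}
    (he : h * g ^ n = h' * g ^ m) : f h + φ n + β h (g ^ n) = f h' + φ m + β h' (g ^ m) := by
  obtain rfl : h' = h * g ^ (n - m) := by rw [zpow_sub, ← mul_assoc, he]; group
  have hd : g ^ (n - m) ∈ H := by simpa using mul_mem (inv_mem hh) hh'
  conv_lhs => rw [show n = (n - m) + m by ring, hφ, zpow_add, hβr]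
  rw [hf h hh _ hd, ← hφH _ hd, hβl]
  abel

theorem extendByZPow_mul_zpow (hβl : ∀ x x' y : G, β (x * x') y = β x y + β x' y)
    (hβr : ∀ x y y' : G, β x (y * y') = β x y + β x y')
    (hf : ∀ x ∈ H, ∀ y ∈ H, f (x * y) = f x + f y + β x y)
    (hφ : ∀ a b, φ (a + b) = φ a + φ b + β (g ^ a) (g ^ b))
    (hφH : ∀ d, g ^ d ∈ H → φ d = f (g ^ d)) {h : G} (hh : h ∈ H) (n : ℤ) :
    extendByZPow H g f φ β (h * g ^ n) = f h + φ n + β h (g ^ n) := by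
  have hx : ∃ p : G × ℤ, p.1 ∈ H ∧ p.1 * g ^ p.2 = h * g ^ n := ⟨(h, n), hh, rfl⟩
  rw [extendByZPow, dif_pos hx]
  exact extendByZPow_formula_congr hβl hβr hf hφ hφH hx.choose_spec.1 hh hx.choose_spec.2

theorem extendByZPow_of_mem (hβl : ∀ x x' y : G, β (x * x') y = β x y + β x' y)
    (hβr : ∀ x y y' : G, β x (y * y') = β x y + β x y')
    (hf : ∀ x ∈ H, ∀ y ∈ H, f (x * y) = f x + f y + β x y)
    (hφ : ∀ a b, φ (a + b) = φ a + φ b + β (g ^ a) (g ^ b))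
    (hφH : ∀ d, g ^ d ∈ H → φ d = f (g ^ d)) {h : G} (hh : h ∈ H) :
    extendByZPow H g f φ β h = f h := by
  have hβ1 : ∀ x, β x 1 = 0 := fun x => by simpa using map_zpow_of_map_mul (hβr x) 1 0
  have hφ0 : φ 0 = 0 := by simpa [hβ1] using hφ 0 0
  simpa [hφ0, hβ1] using extendByZPow_mul_zpow hβl hβr hf hφ hφH hh 0

theorem extendByZPow_mul (hβl : ∀ x x' y : G, β (x * x') y = β x y + β x' y)
    (hβr : ∀ x y y' : G, β x (y * y') = β x y + β x y')
    (hcommH : ∀ x y : G, ⁅x, y⁆ ∈ H) (hβcomm : ∀ x y z : G, β ⁅x, y⁆ z = 0 ∧ β z ⁅x, y⁆ = 0)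
    (hf : ∀ x ∈ H, ∀ y ∈ H, f (x * y) = f x + f y + β x y)
    (hfcomm : ∀ x y : G, f ⁅x, y⁆ = β x y - β y x)
    (hφ : ∀ a b, φ (a + b) = φ a + φ b + β (g ^ a) (g ^ b))
    (hφH : ∀ d, g ^ d ∈ H → φ d = f (g ^ d)) {x y : G} (hx : x ∈ H ⊔ Subgroup.closure {g})
    (hy : y ∈ H ⊔ Subgroup.closure {g}) :
    extendByZPow H g f φ β (x * y) =
      extendByZPow H g f φ β x + extendByZPow H g f φ β y + β x y := by
  have := Subgroup.normal_of_commutator_mem hcommH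
  obtain ⟨h, hh, _, hgn, rfl⟩ := Subgroup.mem_sup_of_normal_left.mp hx
  obtain ⟨k, hk, _, hgm, rfl⟩ := Subgroup.mem_sup_of_normal_left.mp hy
  obtain ⟨n, rfl⟩ := Subgroup.mem_closure_singleton.mp hgn
  obtain ⟨m, rfl⟩ := Subgroup.mem_closure_singleton.mp hgm
  have hz := hcommH (g ^ n) k
  have hprod : h * g ^ n * (k * g ^ m) = h * ⁅g ^ n, k⁆ * k * g ^ (n + m) := by
    rw [commutatorElement_def, zpow_add]; group
  rw [hprod, extendByZPow_mul_zpow hβl hβr hf hφ hφH (mul_mem (mul_mem hh hz) hk),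
    extendByZPow_mul_zpow hβl hβr hf hφ hφH hh, extendByZPow_mul_zpow hβl hβr hf hφ hφH hk,
    hf _ (mul_mem hh hz) _ hk, hf _ hh _ hz, hfcomm, hφ]
  simp only [hβl, hβr, zpow_add, hβcomm]
  abel

end Extension

theorem one_step_extension_general {G L : Type*} [Group G] [AddCommGroup L]
    (B : Subgroup G)
    (hcomm : ∀ x y : G, ⁅x, y⁆ ∈ B)
    (hdiv : ∀ n : ℕ, 0 < n → ∀ l : L, ∃ m : L, n • m = l)
    (β : G → G → L)
    (hβl : ∀ x x' y : G, β (x * x') y = β x y + β x' y)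
    (hβr : ∀ x y y' : G, β x (y * y') = β x y + β x y')
    (hβB : ∀ b ∈ B, ∀ x : G, β b x = 0 ∧ β x b = 0)
    (H : Subgroup G) (hBH : B ≤ H)
    (f : G → L)
    (hf : ∀ x ∈ H, ∀ y ∈ H, f (x * y) = f x + f y + β x y)
    (hfinj : ∀ x ∈ B, ∀ y ∈ B, f x = f y → x = y)
    (hfcomm : ∀ x y : G, f ⁅x, y⁆ = β x y - β y x)
    (g : G) :
    ∃ f' : G → L,
      (∀ h ∈ H, f' h = f h) ∧
      (∀ x ∈ H ⊔ Subgroup.closure {g}, ∀ y ∈ H ⊔ Subgroup.closure {g},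
        f' (x * y) = f' x + f' y + β x y) ∧
      (∀ x ∈ B, ∀ y ∈ B, f' x = f' y → x = y) ∧
      (∀ x y : G, f' ⁅x, y⁆ = β x y - β y x) := by
  have hcommH : ∀ x y : G, ⁅x, y⁆ ∈ H := fun x y => hBH (hcomm x y)
  have hβcomm : ∀ x y z : G, β ⁅x, y⁆ z = 0 ∧ β z ⁅x, y⁆ = 0 := fun x y => hβB _ (hcomm x y)
  obtain ⟨φ, hφ, hφH⟩ := exists_quadratic_extension hdiv (S := H.zpowExponents g) (β g g)
    (F := fun d => f (g ^ d)) fun a ha b hb => by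
      rw [zpow_add, hf _ ha _ hb, map_zpow_zpow_of_biadditive hβl hβr]
  have hφ' : ∀ a b, φ (a + b) = φ a + φ b + β (g ^ a) (g ^ b) := fun a b => by
    rw [hφ, map_zpow_zpow_of_biadditive hβl hβr]
  have hext : ∀ h ∈ H, extendByZPow H g f φ β h = f h := fun h hh =>
    extendByZPow_of_mem hβl hβr hf hφ' hφH hh
  refine ⟨extendByZPow H g f φ β, hext,
    fun x hx y hy => extendByZPow_mul hβl hβr hcommH hβcomm hf hfcomm hφ' hφH hx hy,
    fun x hx y hy hxy => hfinj x hx y hy ?_, fun x y => (hext _ (hcommH x y)).trans (hfcomm x y)⟩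
  rwa [hext x (hBH hx), hext y (hBH hy)] at hxy

/-- One-step extension theorem: `G` nilpotent of class ≤ 2, `B` a central subgroup
containing `[G,G]` (so `G/B` is abelian), `L` a divisible abelian group, `β : G × G → L`
biadditive vanishing on `B` in each argument, `H` a proper subgroup with `B ⊆ H`, and
`f : H → L` satisfying the functional equation on `H`, injective and additive on `B`,
and `f([x,y]) = β(x,y) - β(y,x)` for all `x, y ∈ G`. Then for `g ∈ G \ H`, the map `f`
extends to `⟨H, g⟩` with the same three properties. -/
theorem one_step_extension {G L : Type*} [Group G] [AddCommGroup L]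
    (B : Subgroup G) (hBcentral : B ≤ Subgroup.center G)
    (hcomm : ∀ x y : G, ⁅x, y⁆ ∈ B)
    (hdiv : ∀ n : ℕ, 0 < n → ∀ l : L, ∃ m : L, n • m = l)
    (β : G → G → L)
    (hβl : ∀ x x' y : G, β (x * x') y = β x y + β x' y)
    (hβr : ∀ x y y' : G, β x (y * y') = β x y + β x y')
    (hβB : ∀ b ∈ B, ∀ x : G, β b x = 0 ∧ β x b = 0)
    (H : Subgroup G) (hBH : B ≤ H) (hHproper : H ≠ ⊤)
    (f : G → L)
    (hf : ∀ x ∈ H, ∀ y ∈ H, f (x * y) = f x + f y + β x y)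
    (hfinj : ∀ x ∈ B, ∀ y ∈ B, f x = f y → x = y)
    (hfcomm : ∀ x y : G, f ⁅x, y⁆ = β x y - β y x)
    (g : G) (hg : g ∉ H) :
    ∃ f' : G → L,
      (∀ h ∈ H, f' h = f h) ∧
      (∀ x ∈ H ⊔ Subgroup.closure {g}, ∀ y ∈ H ⊔ Subgroup.closure {g},
        f' (x * y) = f' x + f' y + β x y) ∧
      (∀ x ∈ B, ∀ y ∈ B, f' x = f' y → x = y) ∧
      (∀ x y : G, f' ⁅x, y⁆ = β x y - β y x) :=
  one_step_extension_general B hcomm hdiv β hβl hβr hβB H hBH f hf hfinj hfcomm g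
end

section
/- Every nilpotent group G of class at most 2 embeds into a central extension of abelian groups whose associated cocycle is bilinear; specifically, G embeds into a twisted product G^{ab} ×_β L for some abelian group L and bilinear β : G^{ab} × G^{ab} → L, compatibly with the projection G → G^{ab}. -/
/-
The commutator subgroup `K` of `G` is central. For a character `ψ : Z(G) → ℝ/ℤ` the pairing
`(x, y) ↦ ψ ⁅x, y⁆` descends to an alternating bilinear form `ω` on `Gᵃᵇ`, and `ω = β - βᵀ` for
a bilinear `β`: on a finite sum of cyclic groups take the strictly upper triangular part of `ω`,
and reach arbitrary abelian groups by compactness of `(ℝ/ℤ)^(Gᵃᵇ × Gᵃᵇ)`. Then `G` and the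
twisted product `Gᵃᵇ ×_β ℝ/ℤ` have the same commutator pairing, so their Baer difference is an
abelian extension of `Gᵃᵇ` by `ℝ/ℤ`, which splits because `ℝ/ℤ` is divisible. The splitting gives
`f : G → ℝ/ℤ` with `f (x * y) = f x + f y + β x y` and `f = ψ` on `K`. Characters separate the
points of `Z(G)`, so using all `ψ` at once embeds `G` into `Gᵃᵇ ×_β ∏_ψ ℝ/ℤ`.
-/

/-- The twisted product of abelian groups `A` and `B` along a bilinear map `δ`. -/
def twGroup {A B : Type*} [AddCommGroup A] [AddCommGroup B] (δ : A →+ A →+ B) :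
    Group (A × B) where
  mul p q := (p.1 + q.1, p.2 + q.2 + δ p.1 q.1)
  one := (0, 0)
  inv p := (-p.1, -p.2 + δ p.1 p.1)
  mul_assoc a b c := by
    refine Prod.ext ?_ ?_
    · show a.1 + b.1 + c.1 = a.1 + (b.1 + c.1); abel
    · show a.2 + b.2 + δ a.1 b.1 + c.2 + δ (a.1 + b.1) c.1
        = a.2 + (b.2 + c.2 + δ b.1 c.1) + δ a.1 (b.1 + c.1)
      simp [map_add]; abel
  one_mul a := by
    refine Prod.ext ?_ ?_
    · show 0 + a.1 = a.1; simp
    · show 0 + a.2 + δ 0 a.1 = a.2; simp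
  mul_one a := by
    refine Prod.ext ?_ ?_
    · show a.1 + 0 = a.1; simp
    · show a.2 + 0 + δ a.1 0 = a.2; simp
  inv_mul_cancel a := by
    refine Prod.ext ?_ ?_
    · show -a.1 + a.1 = 0; simp
    · show -a.2 + δ a.1 a.1 + a.2 + δ (-a.1) a.1 = 0
      simp [map_neg]

universe u

open scoped commutatorElement IsMulCommutative

local notation "𝕋" => AddCircle (1 : ℝ)

lemma eq_zero_of_forall_addCircle_apply_eq_zero {N : Type*} [AddCommGroup N] {x : N}
    (h : ∀ ψ : N →+ 𝕋, ψ x = 0) : x = 0 := by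
  refine CharacterModule.eq_zero_of_character_apply fun c => ?_
  let ι : AddCircle (1 : ℚ) →+ 𝕋 :=
    QuotientAddGroup.map _ _ (Rat.castHom ℝ).toAddMonoidHom <| by
      rw [AddSubgroup.zmultiples_le]
      exact AddSubgroup.mem_zmultiples_iff.mpr ⟨1, by simp⟩
  obtain ⟨q, hq⟩ := QuotientAddGroup.mk_surjective (c x)
  have hιc : ι (c x) = 0 := h (ι.comp c)
  rw [← hq] at hιc ⊢
  obtain ⟨n, hn⟩ := (AddCircle.coe_eq_zero_iff (1 : ℝ)).mp hιc
  refine (AddCircle.coe_eq_zero_iff (1 : ℚ)).mpr ⟨n, ?_⟩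
  simp only [zsmul_one, RingHom.toAddMonoidHom_eq_coe, AddMonoidHom.coe_coe,
    Rat.coe_castHom] at hn ⊢
  exact_mod_cast hn

section Antisymmetrization

variable {A B M : Type*} [AddCommGroup A] [AddCommGroup B] [AddCommGroup M]

def AntisymmSurjective (A M : Type*) [AddCommGroup A] [AddCommGroup M] : Prop :=
  ∀ ω : A →+ A →+ M, (∀ a, ω a a = 0) → ∃ β : A →+ A →+ M, β - β.flip = ω

lemma AntisymmSurjective.of_addEquiv (e : A ≃+ B) (h : AntisymmSurjective A M) :
    AntisymmSurjective B M := by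
  intro ω hω
  obtain ⟨β, hβ⟩ := h ((ω.comp e.toAddMonoidHom).compl₂ e.toAddMonoidHom) fun a => hω (e a)
  refine ⟨(β.comp e.symm.toAddMonoidHom).compl₂ e.symm.toAddMonoidHom, ?_⟩
  ext x y
  simpa using DFunLike.congr_fun (DFunLike.congr_fun hβ (e.symm x)) (e.symm y)

lemma apply_swap_eq_neg_of_alternating {ω : A →+ A →+ M} (hω : ∀ a, ω a a = 0) (a b : A) :
    ω b a = -ω a b := by
  have := hω (a + b)
  simp only [map_add, AddMonoidHom.add_apply, hω, zero_add, add_zero] at this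
  exact eq_neg_of_add_eq_zero_left this

lemma eq_zero_of_alternating_of_isAddCyclic [IsAddCyclic A] {ω : A →+ A →+ M}
    (hω : ∀ a, ω a a = 0) : ω = 0 := by
  obtain ⟨c, hc⟩ := IsAddCyclic.exists_zsmul_surjective (G := A)
  ext a b
  obtain ⟨k, rfl⟩ := hc a
  obtain ⟨l, rfl⟩ := hc b
  simp [hω]

/- `β` is the strictly upper triangular part of `ω` in the block decomposition along the
coordinates; the diagonal blocks of `ω` vanish since the factors are cyclic. -/
theorem antisymmSurjective_pi {ι : Type*} [Finite ι] (C : ι → Type*)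
    [∀ i, AddCommGroup (C i)] [∀ i, IsAddCyclic (C i)] :
    AntisymmSurjective (∀ i, C i) M := by
  classical
  cases nonempty_fintype ι
  let _ : LinearOrder ι := LinearOrder.lift' _ (Fintype.equivFin ι).injective
  intro ω hω
  let block : ι × ι → (∀ i, C i) →+ (∀ i, C i) →+ M := fun q =>
    (ω.comp ((AddMonoidHom.single C q.1).comp (Pi.evalAddMonoidHom C q.1))).compl₂
      ((AddMonoidHom.single C q.2).comp (Pi.evalAddMonoidHom C q.2))
  refine ⟨∑ q ∈ Finset.univ.filter (fun q : ι × ι => q.1 < q.2), block q,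
    AddMonoidHom.ext fun f => AddMonoidHom.ext fun g => ?_⟩
  have hsum : ω f g = ∑ q : ι × ι, block q f g := by
    conv_lhs => rw [← Finset.univ_sum_single f, ← Finset.univ_sum_single g]
    simp [block, map_sum, Fintype.sum_prod_type]
    exact Finset.sum_comm
  have hswap : ∀ q : ι × ι, block q g f = -block q.swap f g := fun q =>
    apply_swap_eq_neg_of_alternating hω _ _
  have hdiag : ∀ i, block (i, i) = 0 := fun i => by
    have := eq_zero_of_alternating_of_isAddCyclic
      (ω := (ω.comp (AddMonoidHom.single C i)).compl₂ (AddMonoidHom.single C i)) fun c => hω _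
    refine AddMonoidHom.ext fun f => AddMonoidHom.ext fun g => ?_
    exact DFunLike.congr_fun (DFunLike.congr_fun this (f i)) (g i)
  have hsplit : ∀ q : ι × ι, block q f g =
      (if q.1 < q.2 then block q f g else 0) + (if q.2 < q.1 then block q f g else 0) := by
    rintro ⟨i, j⟩
    rcases lt_trichotomy i j with h | rfl | h
    · simp [h, h.not_gt]
    · simp [hdiag]
    · simp [h, h.not_gt]
  have hreindex : ∑ q : ι × ι, (if q.2 < q.1 then block q f g else 0) =
      ∑ q : ι × ι, (if q.1 < q.2 then block q.swap f g else 0) :=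
    (Fintype.sum_equiv (Equiv.prodComm ι ι) _ _ fun q => rfl).symm
  calc _ = ∑ q : ι × ι, (if q.1 < q.2 then block q f g else 0) +
        ∑ q : ι × ι, (if q.2 < q.1 then block q f g else 0) := by
        simp only [AddMonoidHom.sub_apply, AddMonoidHom.flip_apply,
          AddMonoidHom.finsetSum_apply]
        rw [hreindex, Finset.sum_filter, Finset.sum_filter, sub_eq_add_neg,
          ← Finset.sum_neg_distrib]
        congr 1
        refine Finset.sum_congr rfl fun q _ => ?_
        split_ifs <;> simp [hswap]
    _ = ω f g := by
      rw [hsum, ← Finset.sum_add_distrib]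
      exact Finset.sum_congr rfl fun q _ => (hsplit q).symm

theorem antisymmSurjective_of_fg [AddGroup.FG A] : AntisymmSurjective A M := by
  obtain ⟨n, ι, _, p, -, e, ⟨φ⟩⟩ := AddCommGroup.equiv_free_prod_directSum_zmod A
  let d : Fin n ⊕ ι → ℕ := Sum.elim (fun _ => 0) (fun i => p i ^ e i)
  refine (antisymmSurjective_pi fun s => ZMod (d s)).of_addEquiv
    (((LinearEquiv.sumPiEquivProdPi ℤ _ _ fun s => ZMod (d s)).toAddEquiv.trans ?_).trans φ.symm)
  exact AddEquiv.prodCongr Finsupp.addEquivFunOnFinite.symm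
    (DirectSum.addEquivProd fun i => ZMod (p i ^ e i)).symm

/- For a finite `S ⊆ A`, the functions `A → A → M` satisfying the conditions on `S` form a
nonempty closed set (solve the problem on the subgroup generated by `S` and extend by zero);
these sets are directed, so they meet by compactness of `A → A → M`. -/
theorem antisymmSurjective_of_compactSpace [TopologicalSpace M] [CompactSpace M] [T2Space M]
    [IsTopologicalAddGroup M] : AntisymmSurjective A M := by
  classical
  intro ω hω
  let cond : A → A → A → Set (A → A → M) := fun a b c =>
    {β | β (a + b) c = β a c + β b c ∧ β a (b + c) = β a b + β a c ∧ β a b - β b a = ω a b}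
  let Z : Finset A → Set (A → A → M) := fun S => ⋂ a ∈ S, ⋂ b ∈ S, ⋂ c ∈ S, cond a b c
  have hZ_closed : ∀ S, IsClosed (Z S) := fun S =>
    isClosed_biInter fun a _ => isClosed_biInter fun b _ => isClosed_biInter fun c _ =>
      (isClosed_eq (by fun_prop) (by fun_prop)).inter
        ((isClosed_eq (by fun_prop) (by fun_prop)).inter (isClosed_eq (by fun_prop) (by fun_prop)))
  have hZ_anti : Antitone Z := fun S T hST β hβ => by
    simp only [Z, Set.mem_iInter] at hβ ⊢
    exact fun a ha b hb c hc => hβ a (hST ha) b (hST hb) c (hST hc)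
  have hZ_nonempty : ∀ S, (Z S).Nonempty := fun S => by
    let B := AddSubgroup.closure (S : Set A)
    have : AddGroup.FG B := (AddGroup.fg_iff_addSubgroup_fg B).mpr ⟨S, rfl⟩
    obtain ⟨βB, hβB⟩ :=
      antisymmSurjective_of_fg ((ω.comp B.subtype).compl₂ B.subtype) fun b => hω b
    let r : A → B := fun x => if h : x ∈ B then ⟨x, h⟩ else 0
    have hr : ∀ x (hx : x ∈ B), r x = ⟨x, hx⟩ := fun x hx => dif_pos hx
    refine ⟨fun x y => βB (r x) (r y), ?_⟩
    simp only [Z, Set.mem_iInter]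
    intro a ha b hb c hc
    replace ha := AddSubgroup.subset_closure ha
    replace hb := AddSubgroup.subset_closure hb
    replace hc := AddSubgroup.subset_closure hc
    refine ⟨?_, ?_, ?_⟩ <;> dsimp only
    · rw [hr _ (add_mem ha hb), hr a ha, hr b hb, ← AddMonoidHom.add_apply, ← map_add]
      rfl
    · rw [hr _ (add_mem hb hc), hr b hb, hr c hc, ← map_add]
      rfl
    · rw [hr a ha, hr b hb]
      exact DFunLike.congr_fun (DFunLike.congr_fun hβB ⟨a, ha⟩) ⟨b, hb⟩
  obtain ⟨β, hβ⟩ := IsCompact.nonempty_iInter_of_directed_nonempty_isCompact_isClosed Z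
    hZ_anti.directed_ge hZ_nonempty (fun S => (hZ_closed S).isCompact) hZ_closed
  have key : ∀ a b c, β ∈ cond a b c := fun a b c => by
    simp only [Z, Set.mem_iInter] at hβ
    exact hβ {a, b, c} a (by simp) b (by simp) c (by simp)
  refine ⟨AddMonoidHom.mk' (fun a => AddMonoidHom.mk' (β a) fun b c => (key a b c).2.1)
    fun a b => AddMonoidHom.ext fun c => (key a b c).1, ?_⟩
  ext a b
  exact (key a b 0).2.2

end Antisymmetrization

section TwistedPullback

variable {G A M : Type*} [Group G] [AddCommGroup A] [AddCommGroup M]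

lemma commutatorElement_mem_ker (p : G →* Multiplicative A) (x y : G) : ⁅x, y⁆ ∈ p.ker := by
  simp [MonoidHom.mem_ker, map_commutatorElement, commutatorElement_eq_one_iff_mul_comm, mul_comm]

/-- The fibre product `G ×_A (A ×_β M)` of `p` with the twisted product, realised on `G × M`. -/
@[ext]
structure TwistedPullback (p : G →* Multiplicative A) (β : A →+ A →+ M) where
  fst : G
  snd : M

namespace TwistedPullback

variable {p : G →* Multiplicative A} {β : A →+ A →+ M}

instance : Group (TwistedPullback p β) where
  mul x y := ⟨x.fst * y.fst, x.snd + y.snd + β (p x.fst).toAdd (p y.fst).toAdd⟩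
  one := ⟨1, 0⟩
  inv x := ⟨x.fst⁻¹, -x.snd + β (p x.fst).toAdd (p x.fst).toAdd⟩
  mul_assoc x y z := by
    ext
    · exact mul_assoc _ _ _
    · change _ + _ + _ + _ + β (p (x.fst * y.fst)).toAdd _ =
        _ + (_ + _ + _) + β _ (p (y.fst * z.fst)).toAdd
      simp only [map_mul, toAdd_mul, map_add, AddMonoidHom.add_apply]
      abel
  one_mul x := by
    ext
    · exact one_mul _
    · change 0 + _ + β (p 1).toAdd _ = _
      simp
  mul_one x := by
    ext
    · exact mul_one _
    · change _ + 0 + β _ (p 1).toAdd = _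
      simp
  inv_mul_cancel x := by
    ext
    · exact inv_mul_cancel _
    · change _ + _ + β (p x.fst⁻¹).toAdd _ = 0
      simp

@[simp] lemma mul_fst (x y : TwistedPullback p β) : (x * y).fst = x.fst * y.fst := rfl
@[simp] lemma mul_snd (x y : TwistedPullback p β) :
    (x * y).snd = x.snd + y.snd + β (p x.fst).toAdd (p y.fst).toAdd := rfl
@[simp] lemma inv_fst (x : TwistedPullback p β) : x⁻¹.fst = x.fst⁻¹ := rfl
@[simp] lemma inv_snd (x : TwistedPullback p β) :
    x⁻¹.snd = -x.snd + β (p x.fst).toAdd (p x.fst).toAdd := rfl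

lemma commutatorElement_fst (x y : TwistedPullback p β) : ⁅x, y⁆.fst = ⁅x.fst, y.fst⁆ := by
  simp [commutatorElement_def]

lemma commutatorElement_snd (x y : TwistedPullback p β) :
    ⁅x, y⁆.snd = β (p x.fst).toAdd (p y.fst).toAdd - β (p y.fst).toAdd (p x.fst).toAdd := by
  simp only [commutatorElement_def, mul_snd, mul_fst, inv_snd, inv_fst, map_mul, map_inv,
    toAdd_mul, toAdd_inv, map_add, map_neg, AddMonoidHom.add_apply, AddMonoidHom.neg_apply]
  abel

def graph (χ : p.ker →* Multiplicative M) : p.ker →* TwistedPullback p β where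
  toFun k := ⟨k, (χ k).toAdd⟩
  map_one' := by ext <;> simp <;> rfl
  map_mul' k l := by
    ext
    · rfl
    · simp [MonoidHom.mem_ker.mp k.2]

lemma commutator_le_range_graph {χ : p.ker →* Multiplicative M}
    (hχ : ∀ x y, (χ ⟨⁅x, y⁆, commutatorElement_mem_ker p x y⟩).toAdd =
      β (p x).toAdd (p y).toAdd - β (p y).toAdd (p x).toAdd) :
    commutator (TwistedPullback p β) ≤ (graph χ).range := by
  rw [commutator_def, Subgroup.commutator_le]
  refine fun x _ y _ => ⟨⟨⁅x.fst, y.fst⁆, commutatorElement_mem_ker p _ _⟩, ?_⟩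
  ext
  · exact (commutatorElement_fst x y).symm
  · exact (hχ _ _).trans (commutatorElement_snd x y).symm

lemma eq_zero_of_mk_one_mem_range_graph {χ : p.ker →* Multiplicative M} {t : M}
    (h : (⟨1, t⟩ : TwistedPullback p β) ∈ (graph χ).range) : t = 0 := by
  obtain ⟨k, hk⟩ := h
  obtain rfl : k = 1 := Subtype.ext (congrArg fst hk)
  simpa [graph] using (congrArg snd hk).symm

end TwistedPullback

/- The quotient of the pullback by the graph of `χ` is abelian and contains `M`; since `M` is
injective, it retracts onto `M`, and `f` is minus the retraction on `G × {0}`. -/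
open TwistedPullback in
theorem Module.Baer.exists_twisted_lift (hM : Module.Baer ℤ M) (p : G →* Multiplicative A)
    (β : A →+ A →+ M) (χ : p.ker →* Multiplicative M)
    (hχ : ∀ x y, (χ ⟨⁅x, y⁆, commutatorElement_mem_ker p x y⟩).toAdd =
      β (p x).toAdd (p y).toAdd - β (p y).toAdd (p x).toAdd) :
    ∃ f : G → M, (∀ x y, f (x * y) = f x + f y + β (p x).toAdd (p y).toAdd) ∧
      ∀ k : p.ker, f k = (χ k).toAdd := by
  set N := (graph (β := β) χ).range
  have hN : commutator (TwistedPullback p β) ≤ N := commutator_le_range_graph hχ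
  have : N.Normal := .of_commutator_le _ hN
  have := Subgroup.Normal.quotient_commutative_iff_commutator_le.mpr hN
  let mk : TwistedPullback p β → Additive (TwistedPullback p β ⧸ N) := fun x => .ofMul x
  have mk_mul : ∀ x y, mk (x * y) = mk x + mk y := fun _ _ => rfl
  let ι : M →+ Additive (TwistedPullback p β ⧸ N) :=
    { toFun t := mk ⟨1, t⟩
      map_zero' := rfl
      map_add' s t := by
        rw [← mk_mul]
        congr 1
        ext <;> simp }
  have hι : Function.Injective ι := (injective_iff_map_eq_zero ι).mpr fun t ht =>
    eq_zero_of_mk_one_mem_range_graph ((QuotientGroup.eq_one_iff _).mp ht)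
  obtain ⟨ρ, hρ⟩ := hM.extension_property_addMonoidHom ι hι (AddMonoidHom.id M)
  have hρι : ∀ t, ρ (mk ⟨1, t⟩) = t := fun t => DFunLike.congr_fun hρ t
  refine ⟨fun g => -ρ (mk ⟨g, 0⟩), fun x y => ?_, fun k => ?_⟩
  · have h : (⟨x, 0⟩ * ⟨y, 0⟩ : TwistedPullback p β) =
        ⟨x * y, 0⟩ * ⟨1, β (p x).toAdd (p y).toAdd⟩ := by
      ext <;> simp
    have := congrArg (fun z => ρ (mk z)) h
    simp only [mk_mul, map_add, hρι] at this
    dsimp only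
    rw [eq_sub_of_add_eq this.symm]
    abel
  · have h : (⟨k, 0⟩ : TwistedPullback p β) = graph χ k * ⟨1, -(χ k).toAdd⟩ := by
      ext <;> simp [graph, MonoidHom.mem_ker.mp k.2]
    have hk : mk (graph χ k) = 0 := (QuotientGroup.eq_one_iff _).mpr ⟨k, rfl⟩
    change -ρ (mk _) = _
    rw [h, mk_mul, map_add, hk, hρι]
    simp

end TwistedPullback

theorem Abelianization.exists_lift₂ {G M : Type*} [Group G] [AddCommGroup M] (f : G → G → M)
    (hl : ∀ x x' y, f (x * x') y = f x y + f x' y) (hr : ∀ x y y', f x (y * y') = f x y + f x y') :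
    ∃ F : Additive (Abelianization G) →+ Additive (Abelianization G) →+ M,
      ∀ x y, F (.ofMul (.of x)) (.ofMul (.of y)) = f x y := by
  let L : G →* Abelianization G →* Multiplicative M :=
    { toFun y := Abelianization.lift
        { toFun x := .ofAdd (f x y)
          map_one' := by simpa using hl 1 1 y
          map_mul' x x' := hl x x' y }
      map_one' := by
        ext x
        change Multiplicative.ofAdd (f x 1) = 1
        simpa using hr x 1 1
      map_mul' y y' := by
        ext x
        exact hr x y y' }
  let F := Abelianization.lift L
  refine ⟨AddMonoidHom.mk' (fun a => AddMonoidHom.mk' (fun b => (F b.toMul a.toMul).toAdd) ?_) ?_,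
    fun x y => rfl⟩
  · intro b b'
    simp
  · intro a a'
    ext b
    simp

section ClassTwo

variable {G : Type*} [Group G]

lemma commutatorElement_mul_left_of_commutator_central
    (hG : ∀ x y : G, ⁅x, y⁆ ∈ Subgroup.center G) (x y z : G) :
    ⁅x * y, z⁆ = ⁅x, z⁆ * ⁅y, z⁆ := by
  rw [commutatorElement_mul_left_eq_conj_mul, Subgroup.mem_center_iff.mp (hG y z) x,
    mul_inv_cancel_right]
  exact Subgroup.mem_center_iff.mp (hG x z) _

lemma commutatorElement_mul_right_of_commutator_central
    (hG : ∀ x y : G, ⁅x, y⁆ ∈ Subgroup.center G) (x y z : G) :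
    ⁅x, y * z⁆ = ⁅x, y⁆ * ⁅x, z⁆ := by
  rw [commutatorElement_mul_right_eq_mul_conj, mul_assoc ⁅x, y⁆ y,
    Subgroup.mem_center_iff.mp (hG x z) y, ← mul_assoc, mul_inv_cancel_right]

lemma ker_of_le_center (hG : ∀ x y : G, ⁅x, y⁆ ∈ Subgroup.center G) :
    (Abelianization.of (G := G)).ker ≤ Subgroup.center G := by
  rw [Abelianization.ker_of, commutator_def, Subgroup.commutator_le]
  exact fun x _ y _ => hG x y

theorem exists_twisted_lift_of_character (hG : ∀ x y : G, ⁅x, y⁆ ∈ Subgroup.center G)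
    (ψ : Additive (Subgroup.center G) →+ 𝕋) :
    ∃ (β : Additive (Abelianization G) →+ Additive (Abelianization G) →+ 𝕋) (f : G → 𝕋),
      (∀ x y, f (x * y) = f x + f y + β (.ofMul (.of x)) (.ofMul (.of y))) ∧
      ∀ k : Subgroup.center G, Abelianization.of (k : G) = 1 → f k = ψ (.ofMul k) := by
  obtain ⟨ω, hω⟩ := Abelianization.exists_lift₂ (fun x y => ψ (.ofMul ⟨⁅x, y⁆, hG x y⟩))
    (fun x x' y => by
      rw [← map_add, ← ofMul_mul]
      congr 3
      exact commutatorElement_mul_left_of_commutator_central hG x x' y)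
    (fun x y y' => by
      rw [← map_add, ← ofMul_mul]
      congr 3
      exact commutatorElement_mul_right_of_commutator_central hG x y y')
  have hω_alt : ∀ a, ω a a = 0 := by
    intro a
    obtain ⟨x, hx⟩ := QuotientGroup.mk_surjective a.toMul
    obtain rfl : Additive.ofMul (Abelianization.of x) = a := hx
    rw [hω, ← map_zero ψ]
    congr 2
    exact Subtype.ext (commutatorElement_self x)
  obtain ⟨β, hβ⟩ := antisymmSurjective_of_compactSpace ω hω_alt
  obtain ⟨f, hf, hfk⟩ := (Module.Baer.of_divisible 𝕋).exists_twisted_lift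
    (Abelianization.of : G →* Multiplicative (Additive (Abelianization G))) β
    ((AddMonoidHom.toMultiplicativeRight ψ).comp (Subgroup.inclusion (ker_of_le_center hG)))
    fun x y => by
      change ψ (.ofMul ⟨⁅x, y⁆, hG x y⟩) = (β - β.flip) (.ofMul (.of x)) (.ofMul (.of y))
      rw [hβ, hω]
  exact ⟨β, f, hf, fun k hk => hfk ⟨k, hk⟩⟩

end ClassTwo

/-- Every nilpotent group `G` of class at most 2 embeds into a central extension of
abelian groups with bilinear cocycle: `G` embeds into a twisted product
`G^{ab} ×_β L` for some abelian group `L` and bilinear `β`, compatibly with the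
projection `G → G^{ab}`. -/
theorem class_two_embeds_in_twisted_product
    {G : Type u} [Group G] (hG : ∀ x y : G, ⁅x, y⁆ ∈ Subgroup.center G) :
    ∃ (L : Type u) (_ : AddCommGroup L)
      (β : Additive (Abelianization G) →+ Additive (Abelianization G) →+ L)
      (φ : G → Additive (Abelianization G) × L),
      (letI : Group (Additive (Abelianization G) × L) := twGroup β
        ∀ x y : G, φ (x * y) = φ x * φ y) ∧
      Function.Injective φ ∧
      (∀ g : G, (φ g).1 = Additive.ofMul (Abelianization.of g)) := by
  choose β f hf hfk using exists_twisted_lift_of_character hG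
  refine ⟨(Additive (Subgroup.center G) →+ 𝕋) → 𝕋, inferInstance,
    AddMonoidHom.mk' (fun a => AddMonoidHom.pi fun ψ => β ψ a)
      fun a a' => AddMonoidHom.ext fun b => funext fun ψ => by simp,
    fun g => (.ofMul (.of g), fun ψ => f ψ g), fun x y => ?_, fun x y hxy => ?_, fun g => rfl⟩
  · exact Prod.ext (congrArg Additive.ofMul (map_mul Abelianization.of x y))
      (funext fun ψ => hf ψ x y)
  obtain ⟨hπ, hfxy⟩ := Prod.mk.inj hxy
  have hk : Abelianization.of (x⁻¹ * y) = 1 := by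
    rw [map_mul, map_inv, inv_mul_eq_one]
    exact Additive.ofMul.injective hπ
  let k : Subgroup.center G := ⟨x⁻¹ * y, ker_of_le_center hG hk⟩
  suffices Additive.ofMul k = 0 from
    inv_mul_eq_one.mp (congrArg Subtype.val (Additive.ofMul.injective this))
  refine eq_zero_of_forall_addCircle_apply_eq_zero fun ψ => ?_
  have := hf ψ x (x⁻¹ * y)
  rw [mul_inv_cancel_left, ← congrFun hfxy ψ, hk] at this
  rw [← hfk ψ k hk]
  simpa using this
end

section
/- Let p be an odd prime and G = ⟨x,y,z | x^p = y^p = [x,y]^p = [[x,y],x] = [[x,y],y] = [x,z] = [y,z] = 1, z^p = [x,y]⟩. Then G is nilpotent of class 2 but is not isomorphic to any twisted product A ×_γ B of abelian groups of exponent p, since every such twisted product has exponent p while z has order p² in G. -/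
/-!
A twisted product `A ×_γ B` of abelian groups of exponent `p` has exponent `p` when `p` is odd:
`(a, b) ^ p = (p • a, p • b + C(p, 2) • γ a a)` and `p ∣ C(p, 2)`. In `G`, however,
`z ^ p = [x, y]` is not trivial. To see this, map `G` onto the twisted product `(ℤ/p)² ×_γ ℤ/p²` with
`γ(u, v) = p u₁ v₂` (a twisted product whose second factor has exponent `p²`), sending
`x, y, z` to `((1, 0), 0), ((0, 1), 0), ((0, 0), 1)`: there `[x, y] = (0, p) ≠ 1`.
Class two: `[x, y]` commutes with `x`, `y` and with `z`, since it is a power of `z`. So all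
commutators of generators are central, hence `G / Z(G)` is abelian.
-/

open scoped commutatorElement

section twGroup

variable {A B : Type*} [AddCommGroup A] [AddCommGroup B] (δ : A →+ A →+ B)

theorem twGroup_mul (g h : A × B) :
    (letI := twGroup δ; g * h) = (g.1 + h.1, g.2 + h.2 + δ g.1 h.1) := rfl

theorem twGroup_one : (letI := twGroup δ; (1 : A × B)) = (0, 0) := rfl

theorem twGroup_inv (g : A × B) : (letI := twGroup δ; g⁻¹) = (-g.1, -g.2 + δ g.1 g.1) := rfl

theorem twGroup_pow (g : A × B) (n : ℕ) :
    (letI := twGroup δ; g ^ n) = (n • g.1, n • g.2 + n.choose 2 • δ g.1 g.1) := by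
  let _ := twGroup δ
  induction n with
  | zero => simp [twGroup_one]
  | succ n ih =>
    rw [pow_succ, ih, twGroup_mul]
    simp only [map_nsmul, AddMonoidHom.nsmul_apply, Nat.choose_succ_succ, Nat.choose_one_right,
      succ_nsmul, add_nsmul]
    abel_nf

theorem twGroup_commutatorElement (g h : A × B) :
    (letI := twGroup δ; ⁅g, h⁆) = (0, δ g.1 h.1 - δ h.1 g.1) := by
  let _ := twGroup δ
  simp only [commutatorElement_def, twGroup_mul, twGroup_inv, map_add, map_neg,
    AddMonoidHom.add_apply, AddMonoidHom.neg_apply]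
  ext <;> simp only <;> abel

theorem twGroup_pow_eq_one_of_odd {p : ℕ} (hodd : Odd p) (hA : ∀ a : A, p • a = 0)
    (hB : ∀ b : B, p • b = 0) (g : A × B) : (letI := twGroup δ; g ^ p = 1) := by
  obtain ⟨k, rfl⟩ := hodd
  have hchoose : (2 * k + 1).choose 2 = k * (2 * k + 1) := by
    rw [Nat.choose_two_right, Nat.add_sub_cancel, mul_comm, mul_assoc,
      Nat.mul_div_cancel_left _ two_pos]
  rw [twGroup_pow, twGroup_one, hA, hB, hchoose, mul_nsmul, hB, add_zero]

end twGroup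

theorem commutatorElement_mem_center_of_closure_eq_top {G : Type*} [Group G] {s : Set G}
    (hs : Subgroup.closure s = ⊤) (h : ∀ a ∈ s, ∀ b ∈ s, ⁅a, b⁆ ∈ Subgroup.center G)
    (a b : G) : ⁅a, b⁆ ∈ Subgroup.center G := by
  let π := QuotientGroup.mk' (Subgroup.center G)
  have hcomm : ∀ u ∈ π '' s, ∀ v ∈ π '' s, u * v = v * u := by
    rintro _ ⟨a, ha, rfl⟩ _ ⟨b, hb, rfl⟩
    rw [← commutatorElement_eq_one_iff_mul_comm, ← map_commutatorElement,
      QuotientGroup.mk'_apply, QuotientGroup.eq_one_iff]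
    exact h a ha b hb
  have hgen : Subgroup.closure (π '' s) = ⊤ := by
    rw [← MonoidHom.map_closure, hs,
      Subgroup.map_top_of_surjective _ (QuotientGroup.mk'_surjective _)]
  have := Subgroup.isMulCommutative_closure hcomm
  have hmem (g : G) : π g ∈ Subgroup.closure (π '' s) := hgen ▸ Subgroup.mem_top _
  rw [← QuotientGroup.eq_one_iff, ← QuotientGroup.mk'_apply, map_commutatorElement,
    commutatorElement_eq_one_iff_mul_comm]
  exact congrArg Subtype.val
    (mul_comm' (⟨π a, hmem a⟩ : Subgroup.closure _) ⟨π b, hmem b⟩)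

def ZMod.pMulHom (p : ℕ) : ZMod p →+ ZMod (p ^ 2) :=
  ZMod.lift p ⟨zmultiplesHom _ (p : ZMod (p ^ 2)), by
    rw [zmultiplesHom_apply, natCast_zsmul, nsmul_eq_mul, ← sq, ← Nat.cast_pow,
      ZMod.natCast_self]⟩

theorem ZMod.pMulHom_one (p : ℕ) : ZMod.pMulHom p 1 = p := by
  rw [← Int.cast_one, ZMod.pMulHom, ZMod.lift_coe, zmultiplesHom_apply, one_zsmul]

/-- Relations for the group
`G = ⟨x,y,z | x^p = y^p = [x,y]^p = [[x,y],x] = [[x,y],y] = [x,z] = [y,z] = 1,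
z^p = [x,y]⟩`, with generators `x = 0`, `y = 1`, `z = 2`. -/
def nilRels (p : ℕ) : Set (FreeGroup (Fin 3)) :=
  { (FreeGroup.of (0 : Fin 3)) ^ p, (FreeGroup.of (1 : Fin 3)) ^ p,
    ⁅FreeGroup.of (0 : Fin 3), FreeGroup.of (1 : Fin 3)⁆ ^ p,
    ⁅⁅FreeGroup.of (0 : Fin 3), FreeGroup.of (1 : Fin 3)⁆, FreeGroup.of (0 : Fin 3)⁆,
    ⁅⁅FreeGroup.of (0 : Fin 3), FreeGroup.of (1 : Fin 3)⁆, FreeGroup.of (1 : Fin 3)⁆,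
    ⁅FreeGroup.of (0 : Fin 3), FreeGroup.of (2 : Fin 3)⁆, ⁅FreeGroup.of (1 : Fin 3), FreeGroup.of (2 : Fin 3)⁆,
    (FreeGroup.of (2 : Fin 3)) ^ p * ⁅FreeGroup.of (0 : Fin 3), FreeGroup.of (1 : Fin 3)⁆⁻¹ }

namespace nilRels

variable (p : ℕ)

abbrev x : PresentedGroup (nilRels p) := PresentedGroup.of 0
abbrev y : PresentedGroup (nilRels p) := PresentedGroup.of 1
abbrev z : PresentedGroup (nilRels p) := PresentedGroup.of 2

theorem commutatorElement_commutatorElement_x_y_x : ⁅⁅x p, y p⁆, x p⁆ = 1 := by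
  have h := PresentedGroup.one_of_mem (rels := nilRels p)
    (x := ⁅⁅FreeGroup.of (0 : Fin 3), FreeGroup.of (1 : Fin 3)⁆, FreeGroup.of (0 : Fin 3)⁆)
    (by simp [nilRels])
  rw [map_commutatorElement, map_commutatorElement] at h
  exact h

theorem commutatorElement_commutatorElement_x_y_y : ⁅⁅x p, y p⁆, y p⁆ = 1 := by
  have h := PresentedGroup.one_of_mem (rels := nilRels p)
    (x := ⁅⁅FreeGroup.of (0 : Fin 3), FreeGroup.of (1 : Fin 3)⁆, FreeGroup.of (1 : Fin 3)⁆)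
    (by simp [nilRels])
  rw [map_commutatorElement, map_commutatorElement] at h
  exact h

theorem commutatorElement_x_z : ⁅x p, z p⁆ = 1 := by
  have h := PresentedGroup.one_of_mem (rels := nilRels p)
    (x := ⁅FreeGroup.of (0 : Fin 3), FreeGroup.of (2 : Fin 3)⁆) (by simp [nilRels])
  rw [map_commutatorElement] at h
  exact h

theorem commutatorElement_y_z : ⁅y p, z p⁆ = 1 := by
  have h := PresentedGroup.one_of_mem (rels := nilRels p)
    (x := ⁅FreeGroup.of (1 : Fin 3), FreeGroup.of (2 : Fin 3)⁆) (by simp [nilRels])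
  rw [map_commutatorElement] at h
  exact h

theorem z_pow : z p ^ p = ⁅x p, y p⁆ := by
  have h := PresentedGroup.mk_eq_mk_of_mul_inv_mem (rels := nilRels p)
    (x := FreeGroup.of (2 : Fin 3) ^ p)
    (y := ⁅FreeGroup.of (0 : Fin 3), FreeGroup.of (1 : Fin 3)⁆)
    (by simp only [nilRels, Set.mem_insert_iff, Set.mem_singleton_iff, or_true])
  rw [map_pow, map_commutatorElement] at h
  exact h

theorem commutatorElement_x_y_mem_center :
    ⁅x p, y p⁆ ∈ Subgroup.center (PresentedGroup (nilRels p)) := by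
  rw [Subgroup.center_eq_iInf (PresentedGroup.closure_range_of _)]
  simp only [Subgroup.mem_iInf, Set.forall_mem_range, Subgroup.mem_centralizer_singleton_iff]
  intro i
  fin_cases i
  · exact commutatorElement_eq_one_iff_mul_comm.mp (commutatorElement_commutatorElement_x_y_x p)
  · exact commutatorElement_eq_one_iff_mul_comm.mp (commutatorElement_commutatorElement_x_y_y p)
  · exact z_pow p ▸ pow_mul_comm' _ _

theorem commutatorElement_mem_center (a b : PresentedGroup (nilRels p)) :
    ⁅a, b⁆ ∈ Subgroup.center (PresentedGroup (nilRels p)) := by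
  refine commutatorElement_mem_center_of_closure_eq_top (PresentedGroup.closure_range_of _) ?_ a b
  rintro _ ⟨i, rfl⟩ _ ⟨j, rfl⟩
  have hxy := commutatorElement_x_y_mem_center p
  fin_cases i <;> fin_cases j <;> simp only [Fin.zero_eta, Fin.mk_one, Fin.reduceFinMk]
  all_goals first
    | exact commutatorElement_inv (x p) (y p) ▸ inv_mem hxy
    | simp [hxy, commutatorElement_x_z, commutatorElement_y_z]
    | rw [← commutatorElement_inv]; simp [commutatorElement_x_z, commutatorElement_y_z]

def modelCocycle : (ZMod p × ZMod p) →+ (ZMod p × ZMod p) →+ ZMod (p ^ 2) :=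
  ((AddMonoidHom.mul.compr₂ (ZMod.pMulHom p)).comp (AddMonoidHom.fst _ _)).compl₂
    (AddMonoidHom.snd _ _)

/-- A type synonym: on the product itself, `*` and `1` would resolve to the componentwise ring
structure of `ZMod`, not to the twisted product. -/
def Model : Type := (ZMod p × ZMod p) × ZMod (p ^ 2)

instance : Group (Model p) := twGroup (modelCocycle p)

namespace Model

variable {p}

def mk (u : ZMod p × ZMod p) (c : ZMod (p ^ 2)) : Model p := (u, c)

theorem mk_eq_mk {u v : ZMod p × ZMod p} {c d : ZMod (p ^ 2)} :
    mk u c = mk v d ↔ u = v ∧ c = d :=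
  Prod.mk.injEq _ _ _ _ ▸ Iff.rfl

theorem one_def : (1 : Model p) = mk 0 0 := rfl

theorem mk_mul_mk (u v : ZMod p × ZMod p) (c d : ZMod (p ^ 2)) :
    mk u c * mk v d = mk (u + v) (c + d + ZMod.pMulHom p (u.1 * v.2)) := rfl

theorem mk_pow (u : ZMod p × ZMod p) (c : ZMod (p ^ 2)) (n : ℕ) :
    mk u c ^ n = mk (n • u) (n • c + n.choose 2 • ZMod.pMulHom p (u.1 * u.2)) :=
  twGroup_pow _ (u, c) n

theorem commutatorElement_mk (u v : ZMod p × ZMod p) (c d : ZMod (p ^ 2)) :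
    ⁅mk u c, mk v d⁆ = mk 0 (ZMod.pMulHom p (u.1 * v.2) - ZMod.pMulHom p (v.1 * u.2)) :=
  twGroup_commutatorElement _ (u, c) (v, d)

end Model

def modelGenerators : Fin 3 → Model p :=
  ![.mk (1, 0) 0, .mk (0, 1) 0, .mk 0 1]

theorem modelGenerators_commutatorElement :
    ⁅modelGenerators p 0, modelGenerators p 1⁆ = .mk 0 p := by
  simp [Model.commutatorElement_mk, modelGenerators, ZMod.pMulHom_one]

theorem modelGenerators_rels : ∀ r ∈ nilRels p, FreeGroup.lift (modelGenerators p) r = 1 := by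
  have hp : p • (p : ZMod (p ^ 2)) = 0 := by
    rw [nsmul_eq_mul, ← sq, ← Nat.cast_pow, ZMod.natCast_self]
  rintro r (rfl | rfl | rfl | rfl | rfl | rfl | rfl | rfl) <;>
    simp [Model.mk_pow, Model.commutatorElement_mk, Model.mk_mul_mk, Model.one_def,
      Model.mk_eq_mk, modelGenerators, ZMod.pMulHom_one, hp]

theorem commutatorElement_x_y_ne_one (hp : 1 < p) : ⁅x p, y p⁆ ≠ 1 := by
  intro h
  have := congrArg (PresentedGroup.toGroup (modelGenerators_rels p)) h
  rw [map_commutatorElement, PresentedGroup.toGroup.of, PresentedGroup.toGroup.of,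
    modelGenerators_commutatorElement, map_one, Model.one_def, Model.mk_eq_mk,
    ZMod.natCast_eq_zero_iff] at this
  have : p ^ 2 ∣ p ^ 1 := by rw [pow_one]; exact this.2
  exact absurd ((Nat.pow_dvd_pow_iff_le_right hp).mp this) (by norm_num)

end nilRels

/-- For `p` an odd prime, the presented group
`G = ⟨x,y,z | x^p = y^p = [x,y]^p = [[x,y],x] = [[x,y],y] = [x,z] = [y,z] = 1,
z^p = [x,y]⟩` is nilpotent of class exactly 2, but is not isomorphic to any twisted
product `A ×_γ B` of abelian groups of exponent `p` (every such twisted product has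
exponent `p`, while `z` has order `p²` in `G`). -/
theorem presented_group_not_twisted_product (p : ℕ) (hp : p.Prime) (hodd : Odd p) :
    (∀ a b c : PresentedGroup (nilRels p), ⁅⁅a, b⁆, c⁆ = 1) ∧
    (∃ a b : PresentedGroup (nilRels p), a * b ≠ b * a) ∧
    (∀ (A B : Type) [AddCommGroup A] [AddCommGroup B],
      (∀ a : A, p • a = 0) → (∀ b : B, p • b = 0) →
      ∀ γ : A →+ A →+ B,
        letI : Group (A × B) := twGroup γ
        IsEmpty (PresentedGroup (nilRels p) ≃* (A × B))) := by
  have hxy := nilRels.commutatorElement_x_y_ne_one p hp.one_lt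
  refine ⟨fun a b c => ?_, ⟨_, _, mt commutatorElement_eq_one_iff_mul_comm.mpr hxy⟩, ?_⟩
  · exact commutatorElement_eq_one_iff_mul_comm.mpr
      (Subgroup.mem_center_iff.mp (nilRels.commutatorElement_mem_center p a b) c).symm
  · intro A B _ _ hA hB γ
    let _ := twGroup γ
    refine ⟨fun e => hxy ?_⟩
    rw [← nilRels.z_pow, ← e.map_eq_one_iff, map_pow]
    exact twGroup_pow_eq_one_of_odd γ hodd hA hB _
end

section
/- Let A be a free abelian group and B any abelian group. Then every 2-cocycle γ : A × A → B (with trivial action) is cohomologous to a bilinear map; that is, H²(A,B) = H²_Bil(A,B). -/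
/-!
The commutator `γ x y - γ y x` of a factor set is an alternating biadditive map. On a free
abelian group, with a linearly ordered basis `(e i)`, it equals `β - β.flip` for the bilinear `β`
given on basis vectors by `β (e i) (e j) = γ (e i) (e j) - γ (e j) (e i)` for `j < i` and `0`
otherwise. Then `γ - β` is a symmetric factor set, i.e. it defines an abelian extension of `A`
by `B`; since `A` is projective this extension splits, and a splitting exhibits `γ - β` as a
coboundary.
-/

/-- `γ` is a factor set (2-cocycle with trivial action). -/
def IsFactorSet {A B : Type*} [AddCommGroup A] [AddCommGroup B] (γ : A → A → B) : Prop :=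
  (∀ y : A, γ 0 y = 0) ∧ (∀ x : A, γ x 0 = 0) ∧
    ∀ x y z : A, γ x y + γ (x + y) z = γ y z + γ x (y + z)

/-- `η` is a coboundary: `η(x,y) = h(x) + h(y) - h(x+y)` for some set map `h` with `h(0)=0`. -/
def IsCoboundary {A B : Type*} [AddCommGroup A] [AddCommGroup B] (η : A → A → B) : Prop :=
  ∃ h : A → B, h 0 = 0 ∧ ∀ x y : A, η x y = h x + h y - h (x + y)

namespace LinearMap.IsAlt

variable {R M N : Type*} [CommRing R] [AddCommGroup M] [Module R M] [Module.Free R M]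
  [AddCommGroup N] [Module R N]

theorem exists_eq_sub_flip {c : M →ₗ[R] M →ₗ[R] N} (hc : c.IsAlt) :
    ∃ β : M →ₗ[R] M →ₗ[R] N, β - β.flip = c := by
  let b := Module.Free.chooseBasis R M
  let _ : LinearOrder (Module.Free.ChooseBasisIndex R M) :=
    IsWellOrder.linearOrder WellOrderingRel
  refine ⟨b.constr R fun i => b.constr R fun j => if j < i then c (b i) (b j) else 0,
    b.ext fun i => b.ext fun j => ?_⟩
  simp only [LinearMap.sub_apply, LinearMap.flip_apply, Module.Basis.constr_basis]
  rcases lt_trichotomy i j with h | rfl | h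
  · rw [if_neg h.not_gt, if_pos h, zero_sub, ← hc.neg, neg_neg]
  · simp [hc.self_eq_zero]
  · rw [if_pos h, if_neg h.not_gt, sub_zero]

end LinearMap.IsAlt

section

variable {A B : Type*} [AddCommGroup A] [AddCommGroup B]

namespace IsFactorSet

variable {γ : A → A → B}

theorem sub_addMonoidHom₂ (hγ : IsFactorSet γ) (β : A →+ A →+ B) :
    IsFactorSet fun x y => γ x y - β x y := by
  obtain ⟨hγ_zero_left, hγ_zero_right, hγ_cocycle⟩ := hγ
  refine ⟨fun y => by simp [hγ_zero_left], fun x => by simp [hγ_zero_right], fun x y z => ?_⟩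
  have hβ : β x y + β (x + y) z = β y z + β x (y + z) := by
    simp only [map_add, AddMonoidHom.add_apply]
    abel
  beta_reduce
  linear_combination (norm := abel) hγ_cocycle x y z - hβ

theorem commutator_add_left (hγ : IsFactorSet γ) (x y z : A) :
    γ (x + y) z - γ z (x + y) = (γ x z - γ z x) + (γ y z - γ z y) := by
  have hxyz := hγ.2.2 x y z
  have hzxy := hγ.2.2 z x y
  have hxzy := hγ.2.2 x z y
  rw [add_comm z x] at hzxy
  rw [add_comm z y] at hxzy
  linear_combination (norm := abel) hxyz + hzxy - hxzy

theorem commutator_add_right (hγ : IsFactorSet γ) (x y z : A) :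
    γ x (y + z) - γ (y + z) x = (γ x y - γ y x) + (γ x z - γ z x) := by
  linear_combination (norm := abel) -hγ.commutator_add_left y z x

def commutator (hγ : IsFactorSet γ) : A →+ A →+ B :=
  AddMonoidHom.mk' (fun x => AddMonoidHom.mk' (fun y => γ x y - γ y x) (hγ.commutator_add_right x))
    fun x y => AddMonoidHom.ext (hγ.commutator_add_left x y)

end IsFactorSet

@[ext]
structure FactorSetExtension (γ : A → A → B) where
  fiber : B
  base : A

namespace FactorSetExtension

variable {γ : A → A → B}

instance : Add (FactorSetExtension γ) :=
  ⟨fun p q => ⟨p.fiber + q.fiber + γ p.base q.base, p.base + q.base⟩⟩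

instance : Zero (FactorSetExtension γ) := ⟨⟨0, 0⟩⟩

instance : Neg (FactorSetExtension γ) := ⟨fun p => ⟨-p.fiber - γ p.base (-p.base), -p.base⟩⟩

@[simp] theorem fiber_add (p q : FactorSetExtension γ) :
    (p + q).fiber = p.fiber + q.fiber + γ p.base q.base := rfl

@[simp] theorem base_add (p q : FactorSetExtension γ) : (p + q).base = p.base + q.base := rfl

@[simp] theorem fiber_zero : (0 : FactorSetExtension γ).fiber = 0 := rfl

@[simp] theorem base_zero : (0 : FactorSetExtension γ).base = 0 := rfl

@[simp] theorem fiber_neg (p : FactorSetExtension γ) :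
    (-p).fiber = -p.fiber - γ p.base (-p.base) := rfl

@[simp] theorem base_neg (p : FactorSetExtension γ) : (-p).base = -p.base := rfl

abbrev addCommGroup (hγ : IsFactorSet γ) (hsymm : ∀ x y, γ x y = γ y x) :
    AddCommGroup (FactorSetExtension γ) where
  nsmul := nsmulRec
  zsmul := zsmulRec
  add_assoc p q r := by
    refine FactorSetExtension.ext ?_ (add_assoc _ _ _)
    simp only [fiber_add, base_add]
    linear_combination (norm := abel) hγ.2.2 p.base q.base r.base
  zero_add p := FactorSetExtension.ext (by simp [hγ.1]) (zero_add _)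
  add_zero p := FactorSetExtension.ext (by simp [hγ.2.1]) (add_zero _)
  neg_add_cancel p := by
    refine FactorSetExtension.ext ?_ (neg_add_cancel _)
    simp only [fiber_add, fiber_neg, base_neg, fiber_zero, hsymm (-p.base)]
    abel
  add_comm p q := by
    refine FactorSetExtension.ext ?_ (add_comm _ _)
    simp only [fiber_add, hsymm p.base]
    abel

end FactorSetExtension

theorem IsFactorSet.isCoboundary_of_symm [Module.Projective ℤ A] {γ : A → A → B}
    (hγ : IsFactorSet γ) (hsymm : ∀ x y, γ x y = γ y x) : IsCoboundary γ := by
  let _ := FactorSetExtension.addCommGroup hγ hsymm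
  let π : FactorSetExtension γ →+ A := AddMonoidHom.mk' FactorSetExtension.base fun _ _ => rfl
  obtain ⟨σ, hσ⟩ := Module.projective_lifting_property π.toIntLinearMap LinearMap.id
    fun x => ⟨⟨0, x⟩, rfl⟩
  have hσ_base (x : A) : (σ x).base = x := LinearMap.congr_fun hσ x
  refine ⟨fun x => -(σ x).fiber, by simp, fun x y => ?_⟩
  have hσ_add : (σ (x + y)).fiber = (σ x).fiber + (σ y).fiber + γ x y := by
    rw [map_add σ, FactorSetExtension.fiber_add, hσ_base, hσ_base]
  beta_reduce
  rw [hσ_add]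
  abel

end

/-- If `A` is free abelian and `B` any abelian group, every 2-cocycle `γ : A × A → B`
is cohomologous to a bilinear map; that is, `H²(A,B) = H²_Bil(A,B)`. -/
theorem free_cocycle_cohomologous_to_bilinear {A B : Type*}
    [AddCommGroup A] [AddCommGroup B] [Module.Free ℤ A]
    (γ : A → A → B) (hγ : IsFactorSet γ) :
    ∃ β : A →+ A →+ B, IsCoboundary (fun x y => γ x y - β x y) := by
  let c : A →ₗ[ℤ] A →ₗ[ℤ] B :=
    (addMonoidHomLequivInt ℤ).toLinearMap ∘ₗ hγ.commutator.toIntLinearMap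
  obtain ⟨β, hβ⟩ := LinearMap.IsAlt.exists_eq_sub_flip (c := c) fun x => sub_self (γ x x)
  refine ⟨LinearMap.toAddMonoidHom'.comp β.toAddMonoidHom,
    (hγ.sub_addMonoidHom₂ _).isCoboundary_of_symm fun x y => ?_⟩
  have hxy : β x y - β y x = γ x y - γ y x := LinearMap.congr_fun₂ hβ x y
  simp only [AddMonoidHom.comp_apply, LinearMap.toAddMonoidHom_coe, LinearMap.toAddMonoidHom'_apply]
  linear_combination (norm := abel) -hxy
end
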